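/- arXiv:2411.13085 — 6 statements merged into one kernel-verified Lean document; each statement's English description precedes it below -/
import Mathlib

section
/- Under the stated hypotheses the following bracket relations hold: ⁅k₋, k₋⁆ ⊆ k₋; ⁅k₋, p₋¹⁆ ⊆ p₋¹ and ⁅k₋, p₋²⁆ ⊆ p₋²; ⁅p₋¹, p₋²⁆ ⊆ k₋; ⁅p₋¹, p₊²⁆ = 0; and ⁅p₋¹, p₋¹⁆ = 0, ⁅p₋², p₋²⁆ = 0. -/
/-- **Bracket relations for the two complex structures of a Hermitian-type flag domain.**
`g = k ⊕ p` is a Cartan-type decomposition of a complex Lie algebra, `p = p₋ ⊕ p₊` and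
`p = p'₋ ⊕ p'₊` are two decompositions of `p`, with `p'₋, p'₊` abelian and `k`-invariant,
and `n₋ = k₋ ⊕ p₋` is a Lie subalgebra.  Setting `p₋¹ = p₋ ⊓ p'₊`, `p₋² = p₋ ⊓ p'₋` and
`p₊² = p₊ ⊓ p'₊`, the stated bracket relations hold. -/
theorem bracket_relations_of_flag_domain_decomposition
    {g : Type*} [LieRing g] [LieAlgebra ℂ g]
    (k p pm pp p'm p'p km : Submodule ℂ g)
    -- `g = k ⊕ p`
    (hkp_sup : k ⊔ p = ⊤) (hkp_inf : k ⊓ p = ⊥)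
    -- Cartan relations `⁅k,k⁆ ⊆ k`, `⁅k,p⁆ ⊆ p`, `⁅p,p⁆ ⊆ k`
    (hkk : ∀ x ∈ k, ∀ y ∈ k, ⁅x, y⁆ ∈ k)
    (hkp : ∀ x ∈ k, ∀ y ∈ p, ⁅x, y⁆ ∈ p)
    (hpp : ∀ x ∈ p, ∀ y ∈ p, ⁅x, y⁆ ∈ k)
    -- `p = p₋ ⊕ p₊`
    (hpm_le : pm ≤ p) (hpp_le : pp ≤ p)
    (hpm_sup : pm ⊔ pp = p) (hpm_inf : pm ⊓ pp = ⊥)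
    -- `p = p'₋ ⊕ p'₊` with `p'₋, p'₊` abelian and `k`-invariant
    (hp'm_le : p'm ≤ p) (hp'p_le : p'p ≤ p)
    (hp'_sup : p'm ⊔ p'p = p) (hp'_inf : p'm ⊓ p'p = ⊥)
    (hp'mm : ∀ x ∈ p'm, ∀ y ∈ p'm, ⁅x, y⁆ = 0)
    (hp'pp : ∀ x ∈ p'p, ∀ y ∈ p'p, ⁅x, y⁆ = 0)
    (hkp'm : ∀ x ∈ k, ∀ y ∈ p'm, ⁅x, y⁆ ∈ p'm)
    (hkp'p : ∀ x ∈ k, ∀ y ∈ p'p, ⁅x, y⁆ ∈ p'p)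
    -- `k₋ ⊆ k` and `n₋ = k₋ ⊕ p₋` is a Lie subalgebra
    (hkm_le : km ≤ k)
    (hnm : ∀ x ∈ km ⊔ pm, ∀ y ∈ km ⊔ pm, ⁅x, y⁆ ∈ km ⊔ pm) :
    -- ⁅k₋, k₋⁆ ⊆ k₋
    (∀ x ∈ km, ∀ y ∈ km, ⁅x, y⁆ ∈ km) ∧
    -- ⁅k₋, p₋¹⁆ ⊆ p₋¹
    (∀ x ∈ km, ∀ y ∈ pm ⊓ p'p, ⁅x, y⁆ ∈ pm ⊓ p'p) ∧
    -- ⁅k₋, p₋²⁆ ⊆ p₋²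
    (∀ x ∈ km, ∀ y ∈ pm ⊓ p'm, ⁅x, y⁆ ∈ pm ⊓ p'm) ∧
    -- ⁅p₋¹, p₋²⁆ ⊆ k₋
    (∀ x ∈ pm ⊓ p'p, ∀ y ∈ pm ⊓ p'm, ⁅x, y⁆ ∈ km) ∧
    -- ⁅p₋¹, p₊²⁆ = 0
    (∀ x ∈ pm ⊓ p'p, ∀ y ∈ pp ⊓ p'p, ⁅x, y⁆ = 0) ∧
    -- ⁅p₋¹, p₋¹⁆ = 0
    (∀ x ∈ pm ⊓ p'p, ∀ y ∈ pm ⊓ p'p, ⁅x, y⁆ = 0) ∧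
    -- ⁅p₋², p₋²⁆ = 0
    (∀ x ∈ pm ⊓ p'm, ∀ y ∈ pm ⊓ p'm, ⁅x, y⁆ = 0) := by
  -- key: (km ⊔ pm) ∩ k ≤ km and (km ⊔ pm) ∩ p ≤ pm
  have hk' : ∀ z ∈ km ⊔ pm, z ∈ k → z ∈ km := by
    intro z hz hzk
    obtain ⟨a, ha, b, hb, rfl⟩ := Submodule.mem_sup.mp hz
    have hak : a ∈ k := hkm_le ha
    have hbk : b ∈ k := by
      have : (a + b) - a ∈ k := k.sub_mem hzk hak
      simpa using this
    have : b ∈ k ⊓ p := ⟨hbk, hpm_le hb⟩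
    rw [hkp_inf] at this
    simp only [Submodule.mem_bot] at this
    simpa [this] using ha
  have hp' : ∀ z ∈ km ⊔ pm, z ∈ p → z ∈ pm := by
    intro z hz hzp
    obtain ⟨a, ha, b, hb, rfl⟩ := Submodule.mem_sup.mp hz
    have hbp : b ∈ p := hpm_le hb
    have hap : a ∈ p := by
      have : (a + b) - b ∈ p := p.sub_mem hzp hbp
      simpa using this
    have : a ∈ k ⊓ p := ⟨hkm_le ha, hap⟩
    rw [hkp_inf] at this
    simp only [Submodule.mem_bot] at this
    simpa [this] using hb
  have hkm_mem : ∀ x ∈ km, x ∈ km ⊔ pm := fun x hx => Submodule.mem_sup_left hx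
  have hpm_mem : ∀ x ∈ pm, x ∈ km ⊔ pm := fun x hx => Submodule.mem_sup_right hx
  refine ⟨?_, ?_, ?_, ?_, ?_, ?_, ?_⟩
  · intro x hx y hy
    exact hk' _ (hnm _ (hkm_mem x hx) _ (hkm_mem y hy))
      (hkk x (hkm_le hx) y (hkm_le hy))
  · intro x hx y hy
    exact ⟨hp' _ (hnm _ (hkm_mem x hx) _ (hpm_mem y hy.1))
        (hkp x (hkm_le hx) y (hpm_le hy.1)),
      hkp'p x (hkm_le hx) y hy.2⟩
  · intro x hx y hy
    exact ⟨hp' _ (hnm _ (hkm_mem x hx) _ (hpm_mem y hy.1))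
        (hkp x (hkm_le hx) y (hpm_le hy.1)),
      hkp'm x (hkm_le hx) y hy.2⟩
  · intro x hx y hy
    exact hk' _ (hnm _ (hpm_mem x hx.1) _ (hpm_mem y hy.1))
      (hpp x (hpm_le hx.1) y (hpm_le hy.1))
  · intro x hx y hy
    exact hp'pp x hx.2 y hy.2
  · intro x hx y hy
    exact hp'pp x hx.2 y hy.2
  · intro x hx y hy
    exact hp'mm x hx.2 y hy.2
end

section
/- For the SU(r,s) root data with r ≥ s ≥ 1, one has Σ_{α ∈ Δ⁺_c} α = Σ_{β ∈ Δ⁺_nc} β (i.e. ρ_c = ρ_nc) if and only if r = s + 1. -/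
/-
In the basis `e_i`, `2ρ_c` has coefficients `r - 1 - 2i` on the first block and `s - 1 - 2l` on the
second, while `2ρ_nc` has coefficients `(s - i)₊ - min(i, s)` and `r - 2 - 2l` (for `r ≥ s`, indices
from `0`). The first coordinate forces `r - 1 = s`, and for `r = s + 1` all coefficients agree.
-/

/-- The `i`-th standard basis vector of `ℝⁿ` (`0`-indexed; zero if `i ≥ n`). -/
def stdv (n i : ℕ) : Fin n → ℝ := fun k => if (k : ℕ) = i then 1 else 0

open Finset

section
variable {M : Type*} [AddCommGroup M] (f : ℕ → M)

theorem sum_range_sum_range_sub (n : ℕ) :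
    ∑ j ∈ range n, ∑ i ∈ range j, (f i - f j) = ∑ i ∈ range n, ((n : ℤ) - 1 - 2 * i) • f i := by
  induction n with
  | zero => simp
  | succ n ih =>
    have : ∑ i ∈ range n, ((n + 1 : ℕ) - 1 - 2 * i : ℤ) • f i
        = ∑ i ∈ range n, ((n : ℤ) - 1 - 2 * i) • f i + ∑ i ∈ range n, f i := by
      rw [← sum_add_distrib]; congr! 1 with i; push_cast; module
    rw [sum_range_succ, ih, sum_sub_distrib, sum_const, card_range, sum_range_succ _ n, this]
    push_cast; module

theorem sum_range_sum_range_succ (n : ℕ) :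
    ∑ m ∈ range n, ∑ l ∈ range (m + 1), f l = ∑ l ∈ range n, ((n : ℤ) - l) • f l := by
  induction n with
  | zero => simp
  | succ n ih =>
    have : ∑ l ∈ range n, ((n + 1 : ℕ) - l : ℤ) • f l
        = ∑ l ∈ range n, ((n : ℤ) - l) • f l + ∑ l ∈ range n, f l := by
      rw [← sum_add_distrib]; congr! 1 with l; push_cast; module
    rw [sum_range_succ, ih, sum_range_succ _ n, sum_range_succ _ n, this]
    push_cast; module

theorem sum_range_sum_Ico (n N : ℕ) :
    ∑ l ∈ range n, ∑ i ∈ Ico (l + 1) N, f i = ∑ i ∈ range N, (min i n : ℤ) • f i := by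
  rw [sum_comm' (t' := range N) (s' := fun i => range (min i n)) (by intro l i; simp; omega)]
  simp [← natCast_zsmul]

/- With `f = stdv (r + s)` these are the two sides of the theorem: `f i` plays the role of the
paper's `e_{i+1}`. -/
def twoRhoC (r s : ℕ) : M :=
  ∑ j ∈ range r, ∑ i ∈ range j, (f i - f j) + ∑ m ∈ range s, ∑ l ∈ range m, (f (r + l) - f (r + m))

def twoRhoNC (r s : ℕ) : M :=
  ∑ m ∈ range s, ∑ l ∈ range (m + 1), (f l - f (r + m)) +
    ∑ l ∈ range s, ∑ i ∈ Ico (l + 1) r, (f (r + l) - f i)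

theorem twoRhoC_eq (r s : ℕ) :
    twoRhoC f r s = ∑ i ∈ range r, ((r : ℤ) - 1 - 2 * i) • f i +
      ∑ l ∈ range s, ((s : ℤ) - 1 - 2 * l) • f (r + l) :=
  congrArg₂ _ (sum_range_sum_range_sub f r) (sum_range_sum_range_sub (fun l => f (r + l)) s)

theorem twoRhoNC_eq {r s : ℕ} (hsr : s ≤ r) :
    twoRhoNC f r s = ∑ i ∈ range s, ((s : ℤ) - i) • f i - ∑ i ∈ range r, (min i s : ℤ) • f i +
      ∑ l ∈ range s, ((r : ℤ) - 2 - 2 * l) • f (r + l) := by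
  simp only [twoRhoNC, sum_sub_distrib, sum_range_sum_range_succ, sum_range_sum_Ico, sum_const,
    card_range, Nat.card_Ico]
  have : ∑ l ∈ range s, (r - (l + 1)) • f (r + l) - ∑ m ∈ range s, (m + 1) • f (r + m) =
      ∑ l ∈ range s, ((r : ℤ) - 2 - 2 * l) • f (r + l) := by
    rw [← sum_sub_distrib]
    refine sum_congr rfl fun l hl => ?_
    have hlr : l + 1 ≤ r := by simp at hl; omega
    rw [← natCast_zsmul, ← natCast_zsmul]
    push_cast [hlr]; module
  rw [← this]; abel
end

/-- **`ρ_c = ρ_nc` for `SU(r,s)` iff `r = s + 1`** (indices `0`-based):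
the sum of the compact positive roots equals the sum of the noncompact positive roots
if and only if `r = s + 1`. -/
theorem su_rho_c_eq_rho_nc_iff (r s : ℕ) (hs : 1 ≤ s) (hrs : s ≤ r) :
    (((∑ j ∈ Finset.range r, ∑ i ∈ Finset.range j,
        (stdv (r + s) i - stdv (r + s) j)) +
      ∑ m ∈ Finset.range s, ∑ l ∈ Finset.range m,
        (stdv (r + s) (r + l) - stdv (r + s) (r + m)))
    = ((∑ m ∈ Finset.range s, ∑ l ∈ Finset.range (m + 1),
        (stdv (r + s) l - stdv (r + s) (r + m))) +
      ∑ l ∈ Finset.range s, ∑ i ∈ Finset.Ico (l + 1) r,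
        (stdv (r + s) (r + l) - stdv (r + s) i)))
    ↔ r = s + 1 := by
  change twoRhoC (stdv (r + s)) r s = twoRhoNC (stdv (r + s)) r s ↔ r = s + 1
  rw [twoRhoC_eq, twoRhoNC_eq _ hrs]
  constructor
  · intro h
    have hr : ∀ l, 0 ≠ r + l := by omega
    -- the coordinate of `e_1` reads `r - 1 = s`
    have h0 := congrFun h ⟨0, by omega⟩
    simp [stdv, Finset.sum_apply, hr, show 0 < r by omega, show 0 < s by omega] at h0
    exact_mod_cast (by linarith : (r : ℝ) = s + 1)
  · rintro rfl
    have h_extend : ∑ i ∈ range s, ((s : ℤ) - i) • stdv (s + 1 + s) i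
        = ∑ i ∈ range (s + 1), ((s : ℤ) - i) • stdv (s + 1 + s) i := by simp [sum_range_succ]
    rw [h_extend, ← sum_sub_distrib]
    congr 1 <;> refine sum_congr rfl fun i hi => ?_
    · rw [min_eq_left (by simp at hi; omega)]; push_cast; module
    · push_cast; module
end

section
/- For the Sp(2n,ℂ) root data, Σ_{β ∈ Δ⁺_nc} β − Σ_{α ∈ Δ⁺_c} α = 2·Σ_{1 ≤ i ≤ n, i odd} e_i; that is, ρ_nc − ρ_c = e_1 + e_3 + ⋯ + e_{2m−1} if n = 2m and ρ_nc − ρ_c = e_1 + e_3 + ⋯ + e_{2m+1} if n = 2m+1. -/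
lemma sum_pm (m : ℕ) : ∑ i ∈ Finset.range m, ((-1:ℝ))^i = if m % 2 = 0 then 0 else 1 := by
  induction m with
  | zero => simp
  | succ m ih =>
    rw [Finset.sum_range_succ, ih]
    rcases Nat.even_or_odd m with h | h
    · have h0 := Nat.even_iff.mp h
      simp [h.neg_one_pow, h0, Nat.succ_mod_two_eq_one_iff.mpr h0]
    · have h1 := Nat.odd_iff.mp h
      simp [h.neg_one_pow, h1, Nat.succ_mod_two_eq_zero_iff.mpr h1]

lemma inner1 (k m : ℕ) :
    ∑ i ∈ Finset.range m, ((-1:ℝ)^i * (if k = i then 1 else 0))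
      = if k < m then (-1:ℝ)^k else 0 := by
  simp [mul_ite, Finset.sum_ite_eq]

lemma inner2 (c : Prop) [Decidable c] (m : ℕ) :
    ∑ i ∈ Finset.range m, ((-1:ℝ)^i * (if c then 1 else 0))
      = if c then ∑ i ∈ Finset.range m, ((-1:ℝ))^i else 0 := by
  split <;> simp

lemma outer_le (k n : ℕ) (c : ℝ) :
    ∑ j ∈ Finset.range n, (if k < j + 1 then c else 0) = ((n - k : ℕ) : ℝ) * c := by
  rw [← Finset.sum_filter]
  have : (Finset.range n).filter (fun j => k < j + 1) = Finset.Ico k n := by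
    ext x; simp [Finset.mem_range]; omega
  rw [this, Finset.sum_const, Nat.card_Ico, nsmul_eq_mul]

lemma outer_lt (k n : ℕ) (c : ℝ) :
    ∑ j ∈ Finset.range n, (if k < j then c else 0) = ((n - (k+1) : ℕ) : ℝ) * c := by
  rw [← Finset.sum_filter]
  have : (Finset.range n).filter (fun j => k < j) = Finset.Ico (k+1) n := by
    ext x; simp [Finset.mem_range]; omega
  rw [this, Finset.sum_const, Nat.card_Ico, nsmul_eq_mul]

/-- **`2(ρ_nc - ρ_c)` for `Sp(2n,ℂ)`** (indices `0`-based, so the paper's `1`-based odd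
indices become even indices):
`∑_{Δ⁺_nc} β - ∑_{Δ⁺_c} α = 2·∑_{i < n, i even} e_i`, where
`Δ⁺_c = {(-1)^i (e_i - e_j) : i < j < n}` and
`Δ⁺_nc = {(-1)^i (e_i + e_j) : i ≤ j < n}`. -/
theorem sp_two_rho_nc_sub_rho_c (n : ℕ) (hn : 2 ≤ n) :
    ((∑ j ∈ Finset.range n, ∑ i ∈ Finset.range (j + 1),
        ((-1 : ℝ) ^ i • (stdv n i + stdv n j))) -
      ∑ j ∈ Finset.range n, ∑ i ∈ Finset.range j,
        ((-1 : ℝ) ^ i • (stdv n i - stdv n j)))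
    = (2 : ℝ) • ∑ i ∈ (Finset.range n).filter (fun i => i % 2 = 0), stdv n i := by
  funext k
  have hk : (k : ℕ) < n := k.isLt
  simp only [Pi.sub_apply, Pi.add_apply, Pi.smul_apply, Finset.sum_apply, smul_eq_mul, stdv,
    mul_add, mul_sub, Finset.sum_add_distrib, Finset.sum_sub_distrib,
    inner1, inner2]
  rw [outer_le, outer_lt]
  simp only [sum_pm]
  rw [Finset.sum_ite_eq, Finset.sum_ite_eq, Finset.sum_ite_eq]
  have hmem : (k : ℕ) ∈ (Finset.range n).filter (fun i => i % 2 = 0) ↔ (k:ℕ) % 2 = 0 := by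
    simp [Finset.mem_range, hk]
  have hcast : ((n - (k:ℕ) : ℕ) : ℝ) = ((n - ((k:ℕ)+1) : ℕ) : ℝ) + 1 := by
    have : n - (k:ℕ) = (n - ((k:ℕ)+1)) + 1 := by omega
    rw [this]; push_cast; ring
  rcases Nat.even_or_odd (k : ℕ) with h | h
  · have h0 := Nat.even_iff.mp h
    have h1 : ((k:ℕ)+1) % 2 = 1 := Nat.succ_mod_two_eq_one_iff.mpr h0
    simp [h0, h1, h.neg_one_pow, hmem.mpr h0, hcast]
    ring
  · have h1 := Nat.odd_iff.mp h
    have h0 : ((k:ℕ)+1) % 2 = 0 := Nat.succ_mod_two_eq_zero_iff.mpr h1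
    have hnm : (k:ℕ) ∉ (Finset.range n).filter (fun i => i % 2 = 0) := by
      simp [Finset.mem_filter, h1]
    simp [h0, h1, h.neg_one_pow, hnm, hcast]
    ring
end

section
/- For the Sp(4,ℂ) root data (n = 2, so Δ⁺_c = {e_1 − e_2}, Δ⁺_{nc,1} = {2e_1, e_1 + e_2}, Δ⁺_{nc,2} = {−2e_2}, and ρ_nc − ρ_c = e_1), there do not exist vectors μ₀, λ₀ ∈ ℝ² satisfying all of the following: μ₀ + λ₀ = e_1; ⟨μ₀, α⟩ ≥ 0 and ⟨λ₀, α⟩ ≥ 0 for every α ∈ Δ⁺_c; for every β ∈ Δ⁺_{nc,1} there exists α ∈ Δ⁺_c with ⟨μ₀ − β, α⟩ < 0; and for every γ ∈ Δ⁺_{nc,2} there exists α ∈ Δ⁺_c with ⟨λ₀ − γ, α⟩ < 0. -/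
/-- The standard inner product on `ℝⁿ`. -/
noncomputable def dotp {n : ℕ} (x y : Fin n → ℝ) : ℝ := ∑ k, x k * y k

/-- **No admissible pair of weights for `Sp(4,ℂ)`** (indices `0`-based):
with `Δ⁺_c = {e_0 - e_1}`, `Δ⁺_{nc,1} = {2e_0, e_0 + e_1}`, `Δ⁺_{nc,2} = {-2e_1}` and
`ρ_nc - ρ_c = e_0`, there are no `μ₀, λ₀ ∈ ℝ²` with `μ₀ + λ₀ = e_0`, both pairing
nonnegatively with every compact positive root, such that for every `β ∈ Δ⁺_{nc,1}` some
`α ∈ Δ⁺_c` has `⟨μ₀ - β, α⟩ < 0` and for every `γ ∈ Δ⁺_{nc,2}` some `α ∈ Δ⁺_c` has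
`⟨λ₀ - γ, α⟩ < 0`. -/
theorem sp4_no_admissible_weights :
    ¬ ∃ μ₀ lam₀ : Fin 2 → ℝ,
      μ₀ + lam₀ = stdv 2 0 ∧
      (∀ α ∈ ({stdv 2 0 - stdv 2 1} : Set (Fin 2 → ℝ)),
        0 ≤ dotp μ₀ α ∧ 0 ≤ dotp lam₀ α) ∧
      (∀ β ∈ ({(2 : ℝ) • stdv 2 0, stdv 2 0 + stdv 2 1} : Set (Fin 2 → ℝ)),
        ∃ α ∈ ({stdv 2 0 - stdv 2 1} : Set (Fin 2 → ℝ)), dotp (μ₀ - β) α < 0) ∧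
      (∀ γ ∈ ({-((2 : ℝ) • stdv 2 1)} : Set (Fin 2 → ℝ)),
        ∃ α ∈ ({stdv 2 0 - stdv 2 1} : Set (Fin 2 → ℝ)), dotp (lam₀ - γ) α < 0) := by
  rintro ⟨μ, lam, _hsum, h1, h2, _h3⟩
  obtain ⟨hμ, _⟩ := h1 _ rfl
  obtain ⟨α, hα, hlt⟩ := h2 (stdv 2 0 + stdv 2 1) (Or.inr rfl)
  rw [Set.mem_singleton_iff] at hα
  subst hα
  simp only [dotp, stdv, Fin.sum_univ_two, Pi.sub_apply, Pi.add_apply] at hμ hlt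
  norm_num at hμ hlt
  linarith
end

section
/- Let n ≥ 4. For the Sp(2n,ℂ) root data, there do not exist integer vectors (weights) μ₀, λ₀ ∈ ℤⁿ satisfying all of the following: μ₀ + λ₀ = ρ_nc − ρ_c (= Σ_{i odd} e_i); ⟨μ₀, α⟩ ≥ 0 and ⟨λ₀, α⟩ ≥ 0 for every α ∈ Δ⁺_c; for every β ∈ Δ⁺_{nc,1} there exists α ∈ Δ⁺_c with ⟨μ₀ − β, α⟩ < 0; and for every γ ∈ Δ⁺_{nc,2} there exists α ∈ Δ⁺_c with ⟨λ₀ − γ, α⟩ < 0. -/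
/-- The compact positive roots of `Sp(2n,ℂ)` (`0`-based):
`Δ⁺_c = {(-1)^i (e_i - e_j) : i < j < n}`. -/
def spDeltaC (n : ℕ) : Set (Fin n → ℝ) :=
  {x | ∃ i j : ℕ, i < j ∧ j < n ∧ x = (-1 : ℝ) ^ i • (stdv n i - stdv n j)}

/-- `Δ⁺_{nc,1} = {e_i + e_j : i ≤ j < n, i even}` (`0`-based, so "even" corresponds to the
paper's `1`-based odd indices). -/
def spDeltaNc1 (n : ℕ) : Set (Fin n → ℝ) :=
  {x | ∃ i j : ℕ, i ≤ j ∧ j < n ∧ i % 2 = 0 ∧ x = stdv n i + stdv n j}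

/-- `Δ⁺_{nc,2} = {-(e_i + e_j) : i ≤ j < n, i odd}` (`0`-based). -/
def spDeltaNc2 (n : ℕ) : Set (Fin n → ℝ) :=
  {x | ∃ i j : ℕ, i ≤ j ∧ j < n ∧ i % 2 = 1 ∧ x = -(stdv n i + stdv n j)}

/-- `ρ_nc - ρ_c = ∑_{i < n, i even} e_i` for `Sp(2n,ℂ)` (`0`-based). -/
noncomputable def spRhoDiff (n : ℕ) : Fin n → ℝ :=
  ∑ i ∈ (Finset.range n).filter (fun i => i % 2 = 0), stdv n i

lemma dotp_stdv {n : ℕ} (x : Fin n → ℝ) {i : ℕ} (hi : i < n) :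
    dotp x (stdv n i) = x ⟨i, hi⟩ := by
  have h : ∀ k : Fin n, ((k : ℕ) = i) = (k = ⟨i, hi⟩) := by
    intro k; rw [Fin.ext_iff]
  simp [dotp, stdv, h, mul_ite]

lemma dotp_root {n : ℕ} (x : Fin n → ℝ) {i j : ℕ} (hi : i < n) (hj : j < n) :
    dotp x ((-1:ℝ)^i • (stdv n i - stdv n j)) = (-1:ℝ)^i * (x ⟨i,hi⟩ - x ⟨j,hj⟩) := by
  have h : ∀ k, x k * ((-1:ℝ)^i • (stdv n i - stdv n j)) k
      = (-1:ℝ)^i * (x k * stdv n i k - x k * stdv n j k) := by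
    intro k; simp [Pi.smul_apply, smul_eq_mul]; ring
  rw [dotp, Finset.sum_congr rfl (fun k _ => h k), ← Finset.mul_sum,
    Finset.sum_sub_distrib]
  rw [show ∑ k, x k * stdv n i k = dotp x (stdv n i) from rfl,
    show ∑ k, x k * stdv n j k = dotp x (stdv n j) from rfl,
    dotp_stdv x hi, dotp_stdv x hj]

lemma rho_apply {n : ℕ} (k : Fin n) :
    spRhoDiff n k = if (k : ℕ) % 2 = 0 then 1 else 0 := by
  rw [spRhoDiff, Finset.sum_apply]
  rw [Finset.sum_congr rfl (fun i _ => show stdv n i k = if (k:ℕ) = i then 1 else 0 from rfl)]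
  rw [Finset.sum_ite_eq]
  simp [Finset.mem_filter, Finset.mem_range, k.isLt]

lemma keyIneq1 (a : ℝ) (m p q : ℕ) (hm : m % 2 = 0) (h2 : 2 ≤ m)
    (hpq : p < q) (hq : q ≤ m ∨ q % 2 = 1) :
    0 ≤ (-1:ℝ)^p *
      (((if p % 2 = 0 then a else a - 1) - ((if p = m-2 then (1:ℝ) else 0) + (if p = m then 1 else 0)))
      - ((if q % 2 = 0 then a else a - 1) - ((if q = m-2 then (1:ℝ) else 0) + (if q = m then 1 else 0)))) := by
  rcases Nat.even_or_odd p with hp | hp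
  · have hp2 : p % 2 = 0 := Nat.even_iff.mp hp
    rw [hp.neg_one_pow, one_mul]
    split_ifs <;> first | linarith | (exfalso; omega)
  · have hp2 : p % 2 = 1 := Nat.odd_iff.mp hp
    rw [hp.neg_one_pow]
    split_ifs <;> first | linarith | (exfalso; omega)

lemma keyIneq2 (c : ℝ) (m p q : ℕ) (hm : m % 2 = 1) (h3 : 3 ≤ m)
    (hpq : p < q) (hq : q ≤ m ∨ q % 2 = 0) :
    0 ≤ (-1:ℝ)^p *
      (((if p % 2 = 0 then c else c - 1) + ((if p = m-2 then (1:ℝ) else 0) + (if p = m then 1 else 0)))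
      - ((if q % 2 = 0 then c else c - 1) + ((if q = m-2 then (1:ℝ) else 0) + (if q = m then 1 else 0)))) := by
  rcases Nat.even_or_odd p with hp | hp
  · have hp2 : p % 2 = 0 := Nat.even_iff.mp hp
    rw [hp.neg_one_pow, one_mul]
    split_ifs <;> first | linarith | (exfalso; omega)
  · have hp2 : p % 2 = 1 := Nat.odd_iff.mp hp
    rw [hp.neg_one_pow]
    split_ifs <;> first | linarith | (exfalso; omega)

/-- **No admissible pair of integer weights for `Sp(2n,ℂ)`, `n ≥ 4`:** there are no
integer vectors `μ₀, λ₀ ∈ ℤⁿ` with `μ₀ + λ₀ = ρ_nc - ρ_c`, both pairing nonnegatively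
with every compact positive root, such that for every `β ∈ Δ⁺_{nc,1}` some `α ∈ Δ⁺_c`
has `⟨μ₀ - β, α⟩ < 0` and for every `γ ∈ Δ⁺_{nc,2}` some `α ∈ Δ⁺_c` has
`⟨λ₀ - γ, α⟩ < 0`. -/
theorem sp_no_admissible_weights_of_four_le (n : ℕ) (hn : 4 ≤ n) :
    ¬ ∃ μ₀ lam₀ : Fin n → ℤ,
      (fun k => (μ₀ k : ℝ)) + (fun k => (lam₀ k : ℝ)) = spRhoDiff n ∧
      (∀ α ∈ spDeltaC n,
        0 ≤ dotp (fun k => (μ₀ k : ℝ)) α ∧ 0 ≤ dotp (fun k => (lam₀ k : ℝ)) α) ∧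
      (∀ β ∈ spDeltaNc1 n,
        ∃ α ∈ spDeltaC n, dotp ((fun k => (μ₀ k : ℝ)) - β) α < 0) ∧
      (∀ γ ∈ spDeltaNc2 n,
        ∃ α ∈ spDeltaC n, dotp ((fun k => (lam₀ k : ℝ)) - γ) α < 0) := by
  rintro ⟨μ, lam, H1, H2, H3, H4⟩
  have h0n : 0 < n := by omega
  have h1n : 1 < n := by omega
  -- real dominance
  have hdμ : ∀ i j (hin : i < n) (hjn : j < n), i < j →
      (0:ℝ) ≤ (-1:ℝ)^i * ((μ ⟨i, hin⟩ : ℝ) - (μ ⟨j, hjn⟩ : ℝ)) := by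
    intro i j hin hjn hij
    have h := (H2 _ ⟨i, j, hij, hjn, rfl⟩).1
    rwa [dotp_root _ hin hjn] at h
  have hdlam : ∀ i j (hin : i < n) (hjn : j < n), i < j →
      (0:ℝ) ≤ (-1:ℝ)^i * ((lam ⟨i, hin⟩ : ℝ) - (lam ⟨j, hjn⟩ : ℝ)) := by
    intro i j hin hjn hij
    have h := (H2 _ ⟨i, j, hij, hjn, rfl⟩).2
    rwa [dotp_root _ hin hjn] at h
  -- integer dominance
  have hμe : ∀ i j (hin : i < n) (hjn : j < n), i % 2 = 0 → i < j →
      μ ⟨j, hjn⟩ ≤ μ ⟨i, hin⟩ := by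
    intro i j hin hjn hi hij
    have h := hdμ i j hin hjn hij
    rw [(Nat.even_iff.mpr hi).neg_one_pow, one_mul, sub_nonneg] at h
    exact_mod_cast h
  have hμo : ∀ i j (hin : i < n) (hjn : j < n), i % 2 = 1 → i < j →
      μ ⟨i, hin⟩ ≤ μ ⟨j, hjn⟩ := by
    intro i j hin hjn hi hij
    have h := hdμ i j hin hjn hij
    rw [(Nat.odd_iff.mpr hi).neg_one_pow, neg_one_mul, neg_nonneg, sub_nonpos] at h
    exact_mod_cast h
  have hlame : ∀ i j (hin : i < n) (hjn : j < n), i % 2 = 0 → i < j →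
      lam ⟨j, hjn⟩ ≤ lam ⟨i, hin⟩ := by
    intro i j hin hjn hi hij
    have h := hdlam i j hin hjn hij
    rw [(Nat.even_iff.mpr hi).neg_one_pow, one_mul, sub_nonneg] at h
    exact_mod_cast h
  have hlamo : ∀ i j (hin : i < n) (hjn : j < n), i % 2 = 1 → i < j →
      lam ⟨i, hin⟩ ≤ lam ⟨j, hjn⟩ := by
    intro i j hin hjn hi hij
    have h := hdlam i j hin hjn hij
    rw [(Nat.odd_iff.mpr hi).neg_one_pow, neg_one_mul, neg_nonneg, sub_nonpos] at h
    exact_mod_cast h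
  -- sum condition
  have hsum : ∀ (k : ℕ) (hk : k < n),
      μ ⟨k, hk⟩ + lam ⟨k, hk⟩ = if k % 2 = 0 then 1 else 0 := by
    intro k hk
    have h := congrFun H1 ⟨k, hk⟩
    rw [Pi.add_apply, rho_apply] at h
    split_ifs at h ⊢ <;> exact_mod_cast h
  set a := μ ⟨0, h0n⟩ with ha
  set b := μ ⟨1, h1n⟩ with hb
  -- all entries determined
  have hval : ∀ (k : ℕ) (hk : k < n), μ ⟨k, hk⟩ = if k % 2 = 0 then a else b := by
    intro k hk
    rcases Nat.even_or_odd k with hke | hko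
    · have hk2 : k % 2 = 0 := Nat.even_iff.mp hke
      rw [if_pos hk2]
      rcases Nat.eq_zero_or_pos k with rfl | hk0
      · rfl
      · have h1 : μ ⟨k, hk⟩ ≤ a := hμe 0 k h0n hk rfl hk0
        have h2 : lam ⟨k, hk⟩ ≤ lam ⟨0, h0n⟩ := hlame 0 k h0n hk rfl hk0
        have s0 := hsum 0 h0n
        have sk := hsum k hk
        rw [if_pos rfl] at s0
        rw [if_pos hk2] at sk
        omega
    · have hk2 : k % 2 = 1 := Nat.odd_iff.mp hko
      rw [if_neg (by omega)]
      rcases eq_or_lt_of_le (show 1 ≤ k by omega) with h1k | h1k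
      · subst h1k; rfl
      · have h1 : b ≤ μ ⟨k, hk⟩ := hμo 1 k h1n hk rfl h1k
        have h2 : lam ⟨1, h1n⟩ ≤ lam ⟨k, hk⟩ := hlamo 1 k h1n hk rfl h1k
        have s1 := hsum 1 h1n
        have sk := hsum k hk
        rw [if_neg (by omega)] at s1
        rw [if_neg (by omega)] at sk
        omega
  have hba : b ≤ a := hμe 0 1 h0n h1n rfl Nat.zero_lt_one
  have hab : a ≤ b + 1 := by
    have h2 : lam ⟨1, h1n⟩ ≤ lam ⟨0, h0n⟩ := hlame 0 1 h0n h1n rfl Nat.zero_lt_one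
    have s0 := hsum 0 h0n
    have s1 := hsum 1 h1n
    rw [if_pos rfl] at s0
    rw [if_neg (by omega)] at s1
    omega
  rcases (show a = b ∨ a = b + 1 by omega) with hcase | hcase
  -- case a = b : contradict H4
  · have hm2 : (if n % 2 = 0 then n - 1 else n - 2) % 2 = 1 := by split_ifs with h <;> omega
    have hm3 : 3 ≤ (if n % 2 = 0 then n - 1 else n - 2) := by split_ifs with h <;> omega
    have hmn : (if n % 2 = 0 then n - 1 else n - 2) < n := by split_ifs with h <;> omega
    have hmax : ∀ q, q < n → q % 2 = 1 → q ≤ (if n % 2 = 0 then n - 1 else n - 2) := by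
      intro q hq hq2; split_ifs with h <;> omega
    set m : ℕ := if n % 2 = 0 then n - 1 else n - 2 with hmdef
    obtain ⟨α, hαmem, hneg⟩ :=
      H4 (-(stdv n (m-2) + stdv n m)) ⟨m-2, m, by omega, hmn, by omega, rfl⟩
    obtain ⟨p, q, hpq, hqn, rfl⟩ := hαmem
    rw [dotp_root _ (hpq.trans hqn) hqn] at hneg
    have hx : ∀ (r : ℕ) (hr : r < n),
        ((fun k => (lam k : ℝ)) - (-(stdv n (m-2) + stdv n m))) ⟨r, hr⟩
        = (if r % 2 = 0 then (1:ℝ) - (a:ℝ) else (1 - (a:ℝ)) - 1)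
          + ((if r = m-2 then (1:ℝ) else 0) + (if r = m then 1 else 0)) := by
      intro r hr
      have hs := hsum r hr
      rw [hval r hr] at hs
      have hlam : lam ⟨r, hr⟩ = if r % 2 = 0 then 1 - a else -a := by
        split_ifs at hs ⊢ <;> omega
      simp only [Pi.sub_apply, Pi.neg_apply, Pi.add_apply, stdv, Fin.val_mk,
        sub_neg_eq_add]
      rw [hlam]
      split_ifs <;> push_cast <;> ring
    rw [hx p (hpq.trans hqn), hx q hqn] at hneg
    exact absurd hneg (not_lt.2 (keyIneq2 (1 - (a:ℝ)) m p q hm2 hm3 hpq (by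
      by_cases hq0 : q % 2 = 1
      · exact Or.inl (hmax q hqn hq0)
      · exact Or.inr (by omega))))
  -- case a = b + 1 : contradict H3
  · have hm2 : (if n % 2 = 0 then n - 2 else n - 1) % 2 = 0 := by split_ifs with h <;> omega
    have hm2' : 2 ≤ (if n % 2 = 0 then n - 2 else n - 1) := by split_ifs with h <;> omega
    have hmn : (if n % 2 = 0 then n - 2 else n - 1) < n := by split_ifs with h <;> omega
    have hmax : ∀ q, q < n → q % 2 = 0 → q ≤ (if n % 2 = 0 then n - 2 else n - 1) := by
      intro q hq hq2; split_ifs with h <;> omega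
    set m : ℕ := if n % 2 = 0 then n - 2 else n - 1 with hmdef
    obtain ⟨α, hαmem, hneg⟩ :=
      H3 (stdv n (m-2) + stdv n m) ⟨m-2, m, by omega, hmn, by omega, rfl⟩
    obtain ⟨p, q, hpq, hqn, rfl⟩ := hαmem
    rw [dotp_root _ (hpq.trans hqn) hqn] at hneg
    have hx : ∀ (r : ℕ) (hr : r < n),
        ((fun k => (μ k : ℝ)) - (stdv n (m-2) + stdv n m)) ⟨r, hr⟩
        = (if r % 2 = 0 then (a:ℝ) else (a:ℝ) - 1)
          - ((if r = m-2 then (1:ℝ) else 0) + (if r = m then 1 else 0)) := by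
      intro r hr
      simp only [Pi.sub_apply, Pi.add_apply, stdv, Fin.val_mk]
      rw [hval r hr, hcase]
      split_ifs <;> push_cast <;> ring
    rw [hx p (hpq.trans hqn), hx q hqn] at hneg
    exact absurd hneg (not_lt.2 (keyIneq1 (a:ℝ) m p q hm2 hm2' hpq (by
      by_cases hq0 : q % 2 = 0
      · exact Or.inl (hmax q hqn hq0)
      · exact Or.inr (by omega))))
end

section
/- Assume there exists at least one invariant complex structure Ψ₀ ⊆ Δ_nc, and assume the positive system is non-classical, i.e. there exist β, β′ ∈ Δ⁺_nc with β + β′ ∈ Δ. Then there exists an invariant complex structure Ψ ⊆ Δ_nc such that for every β ∈ Δ⁺_nc ∩ (−Ψ) there exists α ∈ Δ⁺_c with ⟨β, α⟩ > 0. -/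
open RealInnerProductSpace

/-- `Ψ ⊆ Δ_nc` is an *invariant complex structure* for the graded root system
`Δ = Δ_c ⊔ Δ_nc` if `Δ_nc = Ψ ⊔ (-Ψ)`, `(Ψ + Ψ) ∩ Δ = ∅`, and `Ψ` is stable under adding
compact roots (when the sum is a root). -/
def IsInvariantComplexStructure {V : Type*} [AddCommGroup V]
    (Δ Δc Δnc Ψ : Finset V) : Prop :=
  Ψ ⊆ Δnc ∧
  (∀ β ∈ Δnc, β ∈ Ψ ∨ -β ∈ Ψ) ∧
  (∀ β ∈ Ψ, -β ∉ Ψ) ∧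
  (∀ β ∈ Ψ, ∀ β' ∈ Ψ, β + β' ∉ Δ) ∧
  (∀ α ∈ Δc, ∀ ψ ∈ Ψ, α + ψ ∈ Δ → α + ψ ∈ Ψ)

/-!
Let `K` be the span of the compact roots. For an invariant complex structure `Ψ₀`, the vector
`z₀ = ∑ Ψ₀` is orthogonal to `K` (compact reflections permute `Ψ₀`) and to no noncompact root.
Conversely every `z ∈ Kᗮ` orthogonal to no noncompact root defines the invariant complex
structure `{γ ∈ Δ_nc | 0 < ⟪γ, z⟫}`. So it suffices to find such a `z` which is positive on the
set `B` of positive noncompact roots that are antidominant for the compact positive roots: a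
root of `Δ⁺_nc` outside `B` pairs positively with some compact positive root.

Two roots of `B` never add up to an element of `K`: minus their sum would be a dominant element
of the span of the compact positive roots, hence a nonnegative combination of compact simple
roots, contradicting positivity against `ρ = ∑ Δ⁺`. Since the elements of `Ψ₀` in one simple
factor are congruent modulo `K`, while roots in different simple factors have orthogonal
projections to `Kᗮ`, the projections of the roots of `B` to `Kᗮ` pairwise have nonnegative inner
products. Hence their sum `z₁` is positive on `B`, and `z = z₁ + t • z₀` works for a suitable
`t`.
-/

open Finset Filter Topology

namespace HermitianRootSystem

section AddCommGroup

variable {V : Type*} [AddCommGroup V]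

/-- The grading of the roots into compact and noncompact roots induced by a Cartan decomposition
`g = k ⊕ p`. -/
structure IsCompactGrading (Δ Δc Δnc : Finset V) : Prop where
  compact_subset : Δc ⊆ Δ
  noncompact_subset : Δnc ⊆ Δ
  mem_compact_or_mem_noncompact : ∀ α ∈ Δ, α ∈ Δc ∨ α ∈ Δnc
  notMem_noncompact : ∀ α ∈ Δc, α ∉ Δnc
  neg_mem_compact : ∀ α ∈ Δc, -α ∈ Δc
  neg_mem_noncompact : ∀ α ∈ Δnc, -α ∈ Δnc
  add_mem_compact : ∀ α ∈ Δc, ∀ α' ∈ Δc, α + α' ∈ Δ → α + α' ∈ Δc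
  add_mem_noncompact : ∀ α ∈ Δc, ∀ α' ∈ Δnc, α + α' ∈ Δ → α + α' ∈ Δnc
  add_noncompact_mem_compact : ∀ α ∈ Δnc, ∀ α' ∈ Δnc, α + α' ∈ Δ → α + α' ∈ Δc

structure IsPositiveSystem (Δ Δp : Finset V) : Prop where
  subset : Δp ⊆ Δ
  mem_or_neg_mem : ∀ α ∈ Δ, α ∈ Δp ∨ -α ∈ Δp
  neg_notMem : ∀ α ∈ Δp, -α ∉ Δp
  add_mem : ∀ α ∈ Δp, ∀ α' ∈ Δp, α + α' ∈ Δ → α + α' ∈ Δp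

open scoped Classical in
/-- For a positive system `P` these are the simple roots. -/
noncomputable def indecomposables (P : Finset V) : Finset V :=
  {a ∈ P | ∀ x ∈ P, ∀ y ∈ P, x + y ≠ a}

lemma indecomposables_subset (P : Finset V) : indecomposables P ⊆ P := by
  classical
  exact filter_subset _ _

end AddCommGroup

variable {V : Type*} [NormedAddCommGroup V] [InnerProductSpace ℝ V]

lemma mem_orthogonal_span {S : Set V} {z : V} (h : ∀ γ ∈ S, ⟪γ, z⟫ = 0) :
    z ∈ (Submodule.span ℝ S)ᗮ := by
  have : Submodule.span ℝ S ≤ (ℝ ∙ z)ᗮ := Submodule.span_le.2 fun γ hγ =>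
    Submodule.mem_orthogonal_singleton_iff_inner_left.2 (h γ hγ)
  exact (Submodule.mem_orthogonal _ z).2 fun u hu =>
    Submodule.mem_orthogonal_singleton_iff_inner_left.1 (this hu)

lemma inner_sum_pos_of_inner_nonneg {ι : Type*} {s : Finset ι} {v : ι → V}
    (h : ∀ i ∈ s, ∀ j ∈ s, 0 ≤ ⟪v i, v j⟫) {i : ι} (hi : i ∈ s) (hv : v i ≠ 0) :
    0 < ⟪v i, ∑ j ∈ s, v j⟫ := by
  rw [inner_sum]
  exact sum_pos' (fun j hj => h i hi j hj) ⟨i, hi, real_inner_self_pos.2 hv⟩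

lemma exists_nonneg_coeffs_of_inner_nonpos {S : Finset V}
    (hS : ∀ a ∈ S, ∀ b ∈ S, a ≠ b → ⟪a, b⟫ ≤ 0) {y : V}
    (hy : y ∈ Submodule.span ℝ (S : Set V)) (hyS : ∀ γ ∈ S, 0 ≤ ⟪y, γ⟫) :
    ∃ c : V → ℝ, (∀ γ, 0 ≤ c γ) ∧ y = ∑ γ ∈ S, c γ • γ := by
  obtain ⟨f, -, rfl⟩ := Submodule.mem_span_finset.1 hy
  set u := ∑ γ ∈ S, max (-f γ) 0 • γ
  have hsplit : ∑ γ ∈ S, f γ • γ = ∑ γ ∈ S, max (f γ) 0 • γ - u := by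
    rw [← sum_sub_distrib]
    exact sum_congr rfl fun γ _ => by rw [← sub_smul, max_zero_sub_max_neg_zero_eq_self]
  have hyu : 0 ≤ ⟪∑ γ ∈ S, f γ • γ, u⟫ := by
    rw [inner_sum]
    refine sum_nonneg fun γ hγ => ?_
    rw [real_inner_smul_right]
    exact mul_nonneg (le_max_right _ _) (hyS γ hγ)
  -- positive and negative parts are supported on disjoint subsets of `S`
  have hpos_u : ⟪∑ γ ∈ S, max (f γ) 0 • γ, u⟫ ≤ 0 := by
    simp_rw [u, sum_inner, inner_sum, real_inner_smul_left, real_inner_smul_right]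
    refine sum_nonpos fun a ha => sum_nonpos fun b hb => ?_
    rcases eq_or_ne a b with rfl | hab
    · rcases le_total (f a) 0 with h | h <;> simp [h]
    · exact mul_nonpos_of_nonneg_of_nonpos (le_max_right _ _)
        (mul_nonpos_of_nonneg_of_nonpos (le_max_right _ _) (hS a ha b hb hab))
  have hu : u = 0 := by
    rw [hsplit, inner_sub_left] at hyu
    exact real_inner_self_nonpos.1 (by linarith)
  exact ⟨fun γ => max (f γ) 0, fun γ => le_max_right _ _, by rw [hsplit, hu, sub_zero]⟩

lemma mem_span_indecomposables {P : Finset V} {r : V} (hr : ∀ α ∈ P, 0 < ⟪α, r⟫) {a : V}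
    (ha : a ∈ P) : a ∈ Submodule.span ℝ (indecomposables P : Set V) := by
  classical
  by_contra hspan
  set T := P.filter fun a => a ∉ Submodule.span ℝ (indecomposables P : Set V)
  obtain ⟨b, hbT, hmin⟩ := T.exists_min_image (fun b => ⟪b, r⟫) ⟨a, mem_filter.2 ⟨ha, hspan⟩⟩
  obtain ⟨hbP, hb⟩ := mem_filter.1 hbT
  have hlower : ∀ c ∈ P, ⟪c, r⟫ < ⟪b, r⟫ →
      c ∈ Submodule.span ℝ (indecomposables P : Set V) := fun c hc hlt =>
    by_contra fun hcs => (hmin c (mem_filter.2 ⟨hc, hcs⟩)).not_gt hlt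
  have : b ∉ indecomposables P := fun hind => hb (Submodule.subset_span hind)
  simp only [indecomposables, mem_filter, not_and, not_forall, not_not] at this
  obtain ⟨x, hx, y, hy, rfl⟩ := this hbP
  rw [inner_add_left] at hlower
  exact hb (add_mem (hlower x hx (by linarith [hr y hy])) (hlower y hy (by linarith [hr x hx])))

lemma inner_starProjection_orthogonal_eq_zero [FiniteDimensional ℝ V] {S S₁ : Set V} {x y : V}
    (hS₁ : S₁ ⊆ S) (horth : ∀ γ ∈ S₁, ∀ δ ∈ S \ S₁, ⟪γ, δ⟫ = 0)
    (hx : ∀ γ ∈ S \ S₁, ⟪x, γ⟫ = 0) (hy : ∀ γ ∈ S₁, ⟪y, γ⟫ = 0) (hxy : ⟪x, y⟫ = 0) :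
    ⟪(Submodule.span ℝ S)ᗮ.starProjection x, (Submodule.span ℝ S)ᗮ.starProjection y⟫ = 0 := by
  set K := Submodule.span ℝ S
  set v := (Submodule.span ℝ S₁).starProjection x
  have hv : v ∈ Submodule.span ℝ S₁ := Submodule.starProjection_apply_mem _ x
  have hQx : K.starProjection x = v := by
    refine Submodule.eq_starProjection_of_mem_of_inner_eq_zero (Submodule.span_mono hS₁ hv)
      fun w hw => Submodule.inner_left_of_mem_orthogonal hw (mem_orthogonal_span fun γ hγ => ?_)
    by_cases hγ₁ : γ ∈ S₁
    · rw [real_inner_comm]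
      exact Submodule.starProjection_inner_eq_zero x γ (Submodule.subset_span hγ₁)
    · have hvγ : ⟪γ, v⟫ = 0 := Submodule.inner_left_of_mem_orthogonal hv
        (mem_orthogonal_span fun δ hδ => horth δ hδ γ ⟨hγ, hγ₁⟩)
      rw [inner_sub_right, real_inner_comm, hx γ ⟨hγ, hγ₁⟩, hvγ, sub_zero]
  rw [← Submodule.inner_starProjection_left_eq_right, Submodule.starProjection_eq_self_iff.2
    (Submodule.starProjection_apply_mem _ x), Submodule.starProjection_orthogonal_val, hQx,
    inner_sub_left, hxy, Submodule.inner_right_of_mem_orthogonal hv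
      (mem_orthogonal_span fun γ hγ => by rw [real_inner_comm]; exact hy γ hγ), sub_zero]

lemma exists_inner_ne_zero_and_inner_pos {S T : Finset V} {z₀ z₁ : V}
    (hS : ∀ γ ∈ S, ⟪γ, z₀⟫ ≠ 0) (hT : ∀ β ∈ T, 0 < ⟪β, z₁⟫) :
    ∃ t : ℝ, (∀ γ ∈ S, ⟪γ, z₁ + t • z₀⟫ ≠ 0) ∧ ∀ β ∈ T, 0 < ⟪β, z₁ + t • z₀⟫ := by
  simp only [inner_add_right, real_inner_smul_right]
  have hSev : ∀ γ ∈ S, ∀ᶠ t in 𝓝[≠] (0 : ℝ), ⟪γ, z₁⟫ + t * ⟪γ, z₀⟫ ≠ 0 := by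
    intro γ hγ
    by_cases h₁ : ⟪γ, z₁⟫ = 0
    · filter_upwards [self_mem_nhdsWithin] with t ht
      simpa [h₁] using ⟨ht, hS γ hγ⟩
    · exact nhdsWithin_le_nhds (ContinuousAt.eventually_ne (by fun_prop) (by simpa using h₁))
  have hTev : ∀ β ∈ T, ∀ᶠ t in 𝓝 (0 : ℝ), 0 < ⟪β, z₁⟫ + t * ⟪β, z₀⟫ := fun β hβ =>
    ContinuousAt.eventually_lt (by fun_prop) (by fun_prop) (by simpa using hT β hβ)
  exact (((eventually_all_finset S).2 hSev).and
    (nhdsWithin_le_nhds ((eventually_all_finset T).2 hTev))).exists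

noncomputable def reflect (α x : V) : V := x - (2 * ⟪x, α⟫ / ⟪α, α⟫) • α

section Reflect

variable {α : V}

lemma inner_reflect_left (hα : α ≠ 0) (x : V) : ⟪reflect α x, α⟫ = -⟪x, α⟫ := by
  have := real_inner_self_pos.2 hα
  rw [reflect, inner_sub_left, real_inner_smul_left]
  field_simp
  ring

lemma reflect_reflect (hα : α ≠ 0) (x : V) : reflect α (reflect α x) = x := by
  rw [reflect, inner_reflect_left hα, reflect, mul_neg, neg_div, neg_smul, sub_neg_eq_add,
    sub_add_cancel]

lemma reflect_self (hα : α ≠ 0) : reflect α α = -α := by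
  have := real_inner_self_pos.2 hα
  rw [reflect, mul_div_assoc, div_self this.ne', mul_one, two_smul, sub_add_cancel_left]

lemma reflect_neg (α x : V) : reflect (-α) x = reflect α x := by
  simp only [reflect, inner_neg_right, inner_neg_left, neg_neg, mul_neg, neg_div, neg_smul,
    smul_neg]

lemma inner_sum_eq_zero_of_reflect_mem (hα : α ≠ 0) {S : Finset V}
    (hS : ∀ x ∈ S, reflect α x ∈ S) : ⟪∑ x ∈ S, x, α⟫ = 0 := by
  have h : ∑ x ∈ S, ⟪x, α⟫ = ∑ x ∈ S, ⟪reflect α x, α⟫ :=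
    Finset.sum_nbij' (reflect α) (reflect α) hS hS (fun x _ => reflect_reflect hα x)
      (fun x _ => reflect_reflect hα x) fun x _ => by rw [reflect_reflect hα]
  simp only [inner_reflect_left hα, Finset.sum_neg_distrib] at h
  rw [sum_inner]
  linarith

end Reflect

structure IsReducedRootSystem (Δ : Finset V) : Prop where
  ne_zero : ∀ α ∈ Δ, α ≠ 0
  cartan_int : ∀ α ∈ Δ, ∀ β ∈ Δ, ∃ k : ℤ, 2 * ⟪β, α⟫ / ⟪α, α⟫ = k
  reflect_mem : ∀ α ∈ Δ, ∀ β ∈ Δ, reflect α β ∈ Δ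
  reduced : ∀ α ∈ Δ, ∀ t : ℝ, t • α ∈ Δ → t • α = α ∨ t • α = -α

namespace IsReducedRootSystem

variable {Δ : Finset V} (hΔ : IsReducedRootSystem Δ) {α β x y : V}
include hΔ

lemma neg_mem (hβ : β ∈ Δ) : -β ∈ Δ := by
  simpa [reflect_self (hΔ.ne_zero β hβ)] using hΔ.reflect_mem β hβ β hβ

lemma inner_mul_inner_lt (hx : x ∈ Δ) (hy : y ∈ Δ) (hyx : y ≠ x) (hyx' : y ≠ -x) :
    ⟪x, y⟫ * ⟪x, y⟫ < ⟪x, x⟫ * ⟪y, y⟫ := by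
  refine (real_inner_mul_inner_self_le x y).lt_of_ne fun heq => ?_
  have hnorm : |⟪x, y⟫| = ‖x‖ * ‖y‖ := by
    rw [← abs_of_nonneg (by positivity : 0 ≤ ‖x‖ * ‖y‖), ← sq_eq_sq_iff_abs_eq_abs]
    rw [real_inner_self_eq_norm_mul_norm, real_inner_self_eq_norm_mul_norm] at heq
    linear_combination heq
  obtain ⟨r, -, rfl⟩ := (norm_inner_eq_norm_iff (hΔ.ne_zero x hx) (hΔ.ne_zero _ hy)).1
    (by rwa [Real.norm_eq_abs])
  rcases hΔ.reduced x hx r hy with h | h <;> contradiction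

lemma add_mem_of_inner_neg (hx : x ∈ Δ) (hy : y ∈ Δ) (hxy : ⟪x, y⟫ < 0) (hne : x ≠ -y) :
    x + y ∈ Δ := by
  have hxx := real_inner_self_pos.2 (hΔ.ne_zero x hx)
  have hyy := real_inner_self_pos.2 (hΔ.ne_zero y hy)
  have hyx : y ≠ x := fun h => by rw [h] at hxy; linarith
  have hyx' : y ≠ -x := fun h => hne (by rw [h, neg_neg])
  obtain ⟨m, hm⟩ := hΔ.cartan_int y hy x hx
  obtain ⟨n, hn⟩ := hΔ.cartan_int x hx y hy
  rw [real_inner_comm] at hn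
  have hm0 : (m : ℝ) < 0 := hm ▸ div_neg_of_neg_of_pos (by linarith) hyy
  have hn0 : (n : ℝ) < 0 := hn ▸ div_neg_of_neg_of_pos (by linarith) hxx
  -- the product of the two Cartan integers is `4 cos² θ < 4`
  have hmn : (m : ℝ) * n < 4 := by
    rw [← hm, ← hn, div_mul_div_comm, div_lt_iff₀ (by positivity)]
    nlinarith [hΔ.inner_mul_inner_lt hx hy hyx hyx']
  have hmn' : m * n < 4 := by exact_mod_cast hmn
  have hm0' : m < 0 := by exact_mod_cast hm0
  have hn0' : n < 0 := by exact_mod_cast hn0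
  obtain h | h : m = -1 ∨ n = -1 := by
    by_contra! h
    nlinarith [h.1.lt_of_le (by omega : m ≤ -1), h.2.lt_of_le (by omega : n ≤ -1)]
  · have := hΔ.reflect_mem y hy x hx
    rwa [reflect, hm, h, Int.cast_neg, Int.cast_one, neg_one_smul, sub_neg_eq_add] at this
  · have := hΔ.reflect_mem x hx y hy
    rwa [reflect, real_inner_comm, hn, h, Int.cast_neg, Int.cast_one, neg_one_smul,
      sub_neg_eq_add, add_comm] at this

lemma sub_mem_of_inner_pos (hx : x ∈ Δ) (hy : y ∈ Δ) (hxy : 0 < ⟪x, y⟫) (hne : x ≠ y) :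
    x - y ∈ Δ := by
  rw [sub_eq_add_neg]
  exact hΔ.add_mem_of_inner_neg hx (hΔ.neg_mem hy) (by rwa [inner_neg_right, neg_lt_zero])
    (by rwa [neg_neg])

/-- The `α`-string through a root `γ` with `⟪γ, α⟫ ≤ 0` is unbroken up to `s_α γ`. -/
lemma add_smul_mem_of_le {γ : V} (hγ : γ ∈ Δ) (hα : α ∈ Δ) (hγα : γ ≠ -α)
    (hle : ⟪γ, α⟫ ≤ 0) {k : ℕ} (hk : 2 * ⟪γ, α⟫ / ⟪α, α⟫ = -k) {j : ℕ} (hj : j ≤ k) :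
    γ + (j : ℝ) • α ∈ Δ := by
  have hαα := real_inner_self_pos.2 (hΔ.ne_zero α hα)
  have hγα' : ⟪γ, α⟫ = -(k / 2) * ⟪α, α⟫ := by
    field_simp at hk
    linarith
  have hnp : ∀ t : ℝ, t • α ≠ γ := by
    intro t ht
    rcases hΔ.reduced α hα t (ht ▸ hγ) with h | h <;> rw [h] at ht
    · subst ht; linarith
    · exact hγα ht.symm
  induction j using Nat.strong_induction_on with
  | _ j ih =>
  rcases j with _ | j
  · simpa using hγ
  by_cases h2j : 2 * j < k
  · have hmem := ih j (by omega) (by omega)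
    have hneg : ⟪γ + (j : ℝ) • α, α⟫ < 0 := by
      have : (2 * j : ℝ) < k := by exact_mod_cast h2j
      rw [inner_add_left, real_inner_smul_left, hγα']
      nlinarith
    have hne : γ + (j : ℝ) • α ≠ -α := fun h =>
      hnp (-(j + 1)) (by rw [eq_sub_of_add_eq h]; module)
    convert hΔ.add_mem_of_inner_neg hmem hα hneg hne using 1
    push_cast
    module
  · -- reflect the root `γ + (k - j - 1) α`, which lies in the first half of the string
    have hmem := ih (k - (j + 1)) (by omega) (by omega)
    convert hΔ.reflect_mem α hα _ hmem using 1
    have hcast : ((k - (j + 1) : ℕ) : ℝ) = k - j - 1 := by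
      rw [Nat.cast_sub (by omega)]; push_cast; ring
    rw [reflect, hcast, inner_add_left, real_inner_smul_left, hγα']
    field_simp
    push_cast
    module

lemma reflect_mem_of_add_mem {S : Set V} (hS : ∀ x ∈ S, x + α ∈ Δ → x + α ∈ S) {γ : V}
    (hγS : γ ∈ S) (hγ : γ ∈ Δ) (hα : α ∈ Δ) (hγα : γ ≠ -α) (hle : ⟪γ, α⟫ ≤ 0) :
    reflect α γ ∈ S := by
  have hαα := real_inner_self_pos.2 (hΔ.ne_zero α hα)
  obtain ⟨m, hm⟩ := hΔ.cartan_int α hα γ hγ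
  have hm0 : m ≤ 0 := by
    have : (m : ℝ) ≤ 0 := hm ▸ div_nonpos_of_nonpos_of_nonneg (by linarith) hαα.le
    exact_mod_cast this
  have hk : 2 * ⟪γ, α⟫ / ⟪α, α⟫ = -((-m).toNat : ℕ) := by
    have : (((-m).toNat : ℕ) : ℝ) = -m := by exact_mod_cast Int.toNat_of_nonneg (by omega)
    rw [hm, this, neg_neg]
  have hstring : ∀ j ≤ (-m).toNat, γ + (j : ℝ) • α ∈ S := by
    intro j hj
    induction j with
    | zero => simpa using hγS
    | succ j ih =>
      have h := hS _ (ih (by omega))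
        (by convert hΔ.add_smul_mem_of_le hγ hα hγα hle hk hj using 1; push_cast; module)
      convert h using 1
      push_cast
      module
  convert hstring _ le_rfl using 1
  rw [reflect, hk, neg_smul, sub_neg_eq_add]

variable {P : Finset V}

lemma inner_sum_pos (hPΔ : P ⊆ Δ) (hPadd : ∀ x ∈ P, ∀ y ∈ P, x + y ∈ Δ → x + y ∈ P)
    (hPneg : ∀ x ∈ P, -x ∉ P) {α : V} (hα : α ∈ P) : 0 < ⟪α, ∑ γ ∈ P, γ⟫ := by
  classical
  have hα0 := hΔ.ne_zero α (hPΔ hα)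
  -- the roots of `P` whose reflection stays in `P` contribute zero
  have hzero : ⟪α, ∑ γ ∈ P with reflect α γ ∈ P, γ⟫ = 0 := by
    rw [real_inner_comm]
    refine inner_sum_eq_zero_of_reflect_mem hα0 fun x hx => ?_
    rw [mem_filter] at hx ⊢
    exact ⟨hx.2, by rw [reflect_reflect hα0]; exact hx.1⟩
  rw [← sum_filter_add_sum_filter_not P (fun γ => reflect α γ ∈ P), inner_add_right, hzero,
    zero_add, inner_sum]
  refine sum_pos (fun γ hγ => ?_)
    ⟨α, mem_filter.2 ⟨hα, by rw [reflect_self hα0]; exact hPneg α hα⟩⟩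
  rw [mem_filter] at hγ
  by_contra! hle
  exact hγ.2 (hΔ.reflect_mem_of_add_mem (S := ↑P) (fun x hx h => hPadd x hx α hα h) hγ.1
    (hPΔ hγ.1) (hPΔ hα) (fun h => hPneg α hα (h ▸ hγ.1)) (by rwa [real_inner_comm]))

lemma inner_nonpos_of_mem_indecomposables
    (hPsub : ∀ a ∈ P, ∀ b ∈ P, a - b ∈ Δ → a - b ∈ P ∨ b - a ∈ P) (hPΔ : P ⊆ Δ) {a b : V}
    (ha : a ∈ indecomposables P) (hb : b ∈ indecomposables P) (hab : a ≠ b) : ⟪a, b⟫ ≤ 0 := by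
  simp only [indecomposables, mem_filter] at ha hb
  by_contra! hpos
  rcases hPsub a ha.1 b hb.1 (hΔ.sub_mem_of_inner_pos (hPΔ ha.1) (hPΔ hb.1) hpos hab) with h | h
  · exact ha.2 b hb.1 _ h (add_sub_cancel b a)
  · exact hb.2 a ha.1 _ h (add_sub_cancel a b)

lemma exists_nonneg_coeffs_of_dominant (hPΔ : P ⊆ Δ)
    (hPadd : ∀ x ∈ P, ∀ y ∈ P, x + y ∈ Δ → x + y ∈ P) (hPneg : ∀ x ∈ P, -x ∉ P)
    (hPsub : ∀ a ∈ P, ∀ b ∈ P, a - b ∈ Δ → a - b ∈ P ∨ b - a ∈ P) {y : V}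
    (hy : y ∈ Submodule.span ℝ (P : Set V)) (hdom : ∀ α ∈ P, 0 ≤ ⟪y, α⟫) :
    ∃ c : V → ℝ, (∀ γ, 0 ≤ c γ) ∧ y = ∑ γ ∈ indecomposables P, c γ • γ := by
  have hspan : Submodule.span ℝ (P : Set V) ≤ Submodule.span ℝ (indecomposables P : Set V) :=
    Submodule.span_le.2 fun _ ha =>
      mem_span_indecomposables (fun _ => hΔ.inner_sum_pos hPΔ hPadd hPneg) ha
  exact exists_nonneg_coeffs_of_inner_nonpos
    (fun a ha b hb => hΔ.inner_nonpos_of_mem_indecomposables hPsub hPΔ ha hb) (hspan hy)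
    fun γ hγ => hdom γ (indecomposables_subset P hγ)

end IsReducedRootSystem

/-- The connected components of `Δ` in this graph are the simple factors of the root system. -/
def rootGraph (Δ : Finset V) : SimpleGraph V :=
  SimpleGraph.fromRel fun a b => a ∈ Δ ∧ b ∈ Δ ∧ ⟪a, b⟫ ≠ 0

lemma reachable_of_inner_ne_zero {Δ : Finset V} {a b : V} (ha : a ∈ Δ) (hb : b ∈ Δ)
    (h : ⟪a, b⟫ ≠ 0) : (rootGraph Δ).Reachable a b := by
  rcases eq_or_ne a b with rfl | hab
  · rfl
  · exact SimpleGraph.Adj.reachable ⟨hab, Or.inl ⟨ha, hb, h⟩⟩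

lemma inner_ne_zero_of_adj {Δ : Finset V} {a b : V} (h : (rootGraph Δ).Adj a b) :
    a ∈ Δ ∧ b ∈ Δ ∧ ⟪a, b⟫ ≠ 0 := by
  rcases h.2 with h | ⟨hb, ha, h⟩
  · exact h
  · exact ⟨ha, hb, by rwa [real_inner_comm]⟩

lemma reachable_neg {Δ : Finset V} {a : V} (ha : a ∈ Δ) (ha' : -a ∈ Δ) (ha0 : a ≠ 0) :
    (rootGraph Δ).Reachable a (-a) :=
  reachable_of_inner_ne_zero ha ha' (by
    rw [inner_neg_right, neg_ne_zero]; exact (real_inner_self_pos.2 ha0).ne')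

lemma inner_starProjection_eq_zero_of_not_reachable [FiniteDimensional ℝ V] {Δ Δc : Finset V}
    (hΔc : Δc ⊆ Δ) {x y : V} (hx : x ∈ Δ) (hy : y ∈ Δ) (hxy : ¬(rootGraph Δ).Reachable x y) :
    ⟪(Submodule.span ℝ (Δc : Set V))ᗮ.starProjection x,
      (Submodule.span ℝ (Δc : Set V))ᗮ.starProjection y⟫ = 0 := by
  have reach : ∀ {a b}, a ∈ Δ → b ∈ Δ → ⟪a, b⟫ ≠ 0 → (rootGraph Δ).Reachable a b :=
    reachable_of_inner_ne_zero
  refine inner_starProjection_orthogonal_eq_zero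
    (S₁ := {γ | γ ∈ Δc ∧ (rootGraph Δ).Reachable x γ}) (fun γ hγ => hγ.1) ?_ ?_ ?_
    (by_contra fun h => hxy (reach hx hy h))
  · rintro γ ⟨hγ, hxγ⟩ δ ⟨hδ, hxδ⟩
    by_contra h
    exact hxδ ⟨hδ, hxγ.trans (reach (hΔc hγ) (hΔc hδ) h)⟩
  · rintro γ ⟨hγ, hxγ⟩
    by_contra h
    exact hxγ ⟨hγ, reach hx (hΔc hγ) h⟩
  · rintro γ ⟨hγ, hxγ⟩
    by_contra h
    exact hxy (hxγ.trans (reach hy (hΔc hγ) h).symm)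

end HermitianRootSystem

namespace IsInvariantComplexStructure

open HermitianRootSystem

lemma mem_roots {V : Type*} [AddCommGroup V] {Δ Δc Δnc Ψ : Finset V}
    (hΨ : IsInvariantComplexStructure Δ Δc Δnc Ψ) (hG : IsCompactGrading Δ Δc Δnc) {ψ : V}
    (hψ : ψ ∈ Ψ) : ψ ∈ Δ :=
  hG.noncompact_subset (hΨ.1 hψ)

variable {V : Type*} [NormedAddCommGroup V] [InnerProductSpace ℝ V] {Δ Δc Δnc Ψ : Finset V}
  (hΨ : IsInvariantComplexStructure Δ Δc Δnc Ψ) (hΔ : IsReducedRootSystem Δ)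
  (hG : IsCompactGrading Δ Δc Δnc)

include hΨ hΔ hG

lemma inner_nonneg {ψ ψ' : V} (hψ : ψ ∈ Ψ) (hψ' : ψ' ∈ Ψ) : 0 ≤ ⟪ψ, ψ'⟫ := by
  by_contra! h
  exact hΨ.2.2.2.1 ψ hψ ψ' hψ' (hΔ.add_mem_of_inner_neg (hΨ.mem_roots hG hψ)
    (hΨ.mem_roots hG hψ') h fun he => hΨ.2.2.1 ψ' hψ' (he ▸ hψ))

lemma reflect_mem {ψ α : V} (hψ : ψ ∈ Ψ) (hα : α ∈ Δc) : reflect α ψ ∈ Ψ := by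
  have key : ∀ α ∈ Δc, ⟪ψ, α⟫ ≤ 0 → reflect α ψ ∈ Ψ := fun α hα hle =>
    hΔ.reflect_mem_of_add_mem (S := ↑Ψ)
      (fun x hx h => by rw [add_comm] at h ⊢; exact hΨ.2.2.2.2 α hα x hx h) hψ
      (hΨ.mem_roots hG hψ) (hG.compact_subset hα)
      (fun h => hG.notMem_noncompact _ (hG.neg_mem_compact α hα) (h ▸ hΨ.1 hψ)) hle
  rcases le_total ⟪ψ, α⟫ 0 with h | h
  · exact key α hα h
  · rw [← reflect_neg]
    exact key (-α) (hG.neg_mem_compact α hα) (by rw [inner_neg_right]; linarith)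

lemma inner_sum_eq_zero {α : V} (hα : α ∈ Δc) : ⟪∑ ψ ∈ Ψ, ψ, α⟫ = 0 :=
  inner_sum_eq_zero_of_reflect_mem (hΔ.ne_zero α (hG.compact_subset hα)) fun _ hψ =>
    hΨ.reflect_mem hΔ hG hψ hα

lemma inner_sum_pos {ψ : V} (hψ : ψ ∈ Ψ) : 0 < ⟪ψ, ∑ ψ' ∈ Ψ, ψ'⟫ :=
  inner_sum_pos_of_inner_nonneg (v := id) (fun _ hψ _ hψ' => hΨ.inner_nonneg hΔ hG hψ hψ') hψ
    (hΔ.ne_zero ψ (hΨ.mem_roots hG hψ))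

lemma exists_mem_orthogonal_inner_ne_zero :
    ∃ z₀ ∈ (Submodule.span ℝ (Δc : Set V))ᗮ, ∀ γ ∈ Δnc, ⟪γ, z₀⟫ ≠ 0 := by
  refine ⟨∑ ψ ∈ Ψ, ψ, mem_orthogonal_span fun α hα => ?_, fun γ hγ => ?_⟩
  · rw [real_inner_comm]
    exact hΨ.inner_sum_eq_zero hΔ hG hα
  · rcases hΨ.2.1 γ hγ with h | h
    · exact (hΨ.inner_sum_pos hΔ hG h).ne'
    · have := hΨ.inner_sum_pos hΔ hG h
      rw [inner_neg_left] at this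
      linarith

lemma sub_mem_span_of_inner_ne_zero {ψ ψ' : V} (hψ : ψ ∈ Ψ) (hψ' : ψ' ∈ Ψ)
    (h : ⟪ψ, ψ'⟫ ≠ 0) : ψ - ψ' ∈ Submodule.span ℝ (Δc : Set V) := by
  rcases eq_or_ne ψ ψ' with rfl | hne
  · rw [sub_self]
    exact zero_mem _
  have hsub := hΔ.sub_mem_of_inner_pos (hΨ.mem_roots hG hψ) (hΨ.mem_roots hG hψ')
    ((hΨ.inner_nonneg hΔ hG hψ hψ').lt_of_ne h.symm) hne
  rw [sub_eq_add_neg] at hsub ⊢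
  exact Submodule.subset_span (hG.add_noncompact_mem_compact ψ (hΨ.1 hψ) (-ψ')
    (hG.neg_mem_noncompact ψ' (hΨ.1 hψ')) hsub)

lemma sub_mem_span_of_reachable {ψ ψ' : V} (hψ : ψ ∈ Ψ) (hψ' : ψ' ∈ Ψ)
    (hreach : (rootGraph Δ).Reachable ψ ψ') : ψ' - ψ ∈ Submodule.span ℝ (Δc : Set V) := by
  set K := Submodule.span ℝ (Δc : Set V)
  -- walking from `ψ`, keep an element of `Ψ` congruent to `ψ` which meets the current root
  suffices h : ∀ γ, (rootGraph Δ).Reachable ψ γ → ∃ ψ₂ ∈ Ψ, ψ₂ - ψ ∈ K ∧ ⟪γ, ψ₂⟫ ≠ 0 by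
    obtain ⟨ψ₂, hψ₂, hK, hne⟩ := h ψ' hreach
    rw [← sub_add_sub_cancel ψ' ψ₂ ψ]
    exact add_mem (hΨ.sub_mem_span_of_inner_ne_zero hΔ hG hψ' hψ₂ hne) hK
  intro γ hγ
  rw [SimpleGraph.reachable_iff_reflTransGen] at hγ
  induction hγ with
  | refl => exact ⟨ψ, hψ, by simp, (real_inner_self_pos.2 (hΔ.ne_zero ψ (hΨ.mem_roots hG hψ))).ne'⟩
  | @tail b c _ hadj ih =>
    obtain ⟨hb, -, hbc⟩ := inner_ne_zero_of_adj hadj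
    obtain ⟨ψ₂, hψ₂, hK, hbψ₂⟩ := ih
    obtain hcψ₂ | hcψ₂ := ne_or_eq ⟪c, ψ₂⟫ 0
    · exact ⟨ψ₂, hψ₂, hK, hcψ₂⟩
    rcases hG.mem_compact_or_mem_noncompact b hb with hbc' | hbn
    · -- `ψ₂ ± b` lies in `Ψ`
      obtain ⟨b', hb', hb'ψ₂, hcb'⟩ : ∃ b' ∈ Δc, ⟪ψ₂, b'⟫ < 0 ∧ ⟪c, b'⟫ ≠ 0 := by
        rcases lt_or_gt_of_ne (by rwa [real_inner_comm] at hbψ₂ : ⟪ψ₂, b⟫ ≠ 0) with h | h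
        · exact ⟨b, hbc', h, by rwa [real_inner_comm]⟩
        · refine ⟨-b, hG.neg_mem_compact b hbc', by rw [inner_neg_right]; linarith, ?_⟩
          rw [inner_neg_right, neg_ne_zero, real_inner_comm]
          exact hbc
      have hsum := hΔ.add_mem_of_inner_neg (hΨ.mem_roots hG hψ₂) (hG.compact_subset hb')
        hb'ψ₂ fun h => hG.notMem_noncompact _ (hG.neg_mem_compact b' hb') (h ▸ hΨ.1 hψ₂)
      refine ⟨b' + ψ₂, hΨ.2.2.2.2 b' hb' ψ₂ hψ₂ (by rwa [add_comm]), ?_, ?_⟩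
      · rw [add_sub_assoc]
        exact add_mem (Submodule.subset_span hb') hK
      · rwa [inner_add_right, hcψ₂, add_zero]
    · -- `± b` lies in `Ψ`
      obtain ⟨b', hb', hb'ψ₂, hcb'⟩ : ∃ b' ∈ Ψ, ⟪b', ψ₂⟫ ≠ 0 ∧ ⟪c, b'⟫ ≠ 0 := by
        rcases hΨ.2.1 b hbn with h | h
        · exact ⟨b, h, hbψ₂, by rwa [real_inner_comm]⟩
        · refine ⟨-b, h, by rwa [inner_neg_left, neg_ne_zero], ?_⟩
          rw [inner_neg_right, neg_ne_zero, real_inner_comm]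
          exact hbc
      refine ⟨b', hb', ?_, hcb'⟩
      rw [← sub_add_sub_cancel b' ψ₂ ψ]
      exact add_mem (hΨ.sub_mem_span_of_inner_ne_zero hΔ hG hb' hψ₂ hb'ψ₂) hK

lemma sub_mem_span_or_add_mem_span_of_reachable {β β' : V} (hβ : β ∈ Δnc) (hβ' : β' ∈ Δnc)
    (hreach : (rootGraph Δ).Reachable β β') :
    β' - β ∈ Submodule.span ℝ (Δc : Set V) ∨ β' + β ∈ Submodule.span ℝ (Δc : Set V) := by
  have hsign : ∀ β ∈ Δnc, ∃ ψ ∈ Ψ, (ψ = β ∨ ψ = -β) ∧ (rootGraph Δ).Reachable β ψ := by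
    intro β hβ
    have hβΔ := hG.noncompact_subset hβ
    rcases hΨ.2.1 β hβ with h | h
    · exact ⟨β, h, Or.inl rfl, .refl _⟩
    · exact ⟨-β, h, Or.inr rfl, reachable_neg hβΔ (hΔ.neg_mem hβΔ) (hΔ.ne_zero β hβΔ)⟩
  obtain ⟨ψ, hψ, hψβ, hβψ⟩ := hsign β hβ
  obtain ⟨ψ', hψ', hψ'β', hβ'ψ'⟩ := hsign β' hβ'
  have h := hΨ.sub_mem_span_of_reachable hΔ hG hψ hψ' (hβψ.symm.trans (hreach.trans hβ'ψ'))
  rcases hψβ with rfl | rfl <;> rcases hψ'β' with rfl | rfl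
  · exact Or.inl h
  · rw [← neg_add', Submodule.neg_mem_iff] at h
    exact Or.inr h
  · rw [sub_neg_eq_add] at h
    exact Or.inr h
  · rw [neg_sub_neg, ← neg_sub, Submodule.neg_mem_iff] at h
    exact Or.inl h

end IsInvariantComplexStructure

namespace HermitianRootSystem

variable {V : Type*} [NormedAddCommGroup V] [InnerProductSpace ℝ V] {Δ Δc Δnc Δp : Finset V}
  (hΔ : IsReducedRootSystem Δ) (hG : IsCompactGrading Δ Δc Δnc) (hP : IsPositiveSystem Δ Δp)
include hΔ hG hP

lemma add_notMem_span_compact {β β' : V} (hβ : β ∈ Δp) (hβ' : β' ∈ Δp)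
    (hβc : ∀ α ∈ Δp, α ∈ Δc → ⟪β, α⟫ ≤ 0) (hβ'c : ∀ α ∈ Δp, α ∈ Δc → ⟪β', α⟫ ≤ 0) :
    β + β' ∉ Submodule.span ℝ (Δc : Set V) := by
  classical
  intro hK
  set Pc := {α ∈ Δp | α ∈ Δc}
  have hPc : ∀ {α}, α ∈ Pc ↔ α ∈ Δp ∧ α ∈ Δc := mem_filter
  have hPcΔ : Pc ⊆ Δ := fun α hα => hP.subset (hPc.1 hα).1
  have hPcadd : ∀ x ∈ Pc, ∀ y ∈ Pc, x + y ∈ Δ → x + y ∈ Pc := fun x hx y hy h =>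
    hPc.2 ⟨hP.add_mem x (hPc.1 hx).1 y (hPc.1 hy).1 h,
      hG.add_mem_compact x (hPc.1 hx).2 y (hPc.1 hy).2 h⟩
  have hPcneg : ∀ x ∈ Pc, -x ∉ Pc := fun x hx h => hP.neg_notMem x (hPc.1 hx).1 (hPc.1 h).1
  have hPcsub : ∀ a ∈ Pc, ∀ b ∈ Pc, a - b ∈ Δ → a - b ∈ Pc ∨ b - a ∈ Pc := by
    intro a ha b hb h
    have hc : a - b ∈ Δc := by
      rw [sub_eq_add_neg] at h ⊢
      exact hG.add_mem_compact a (hPc.1 ha).2 _ (hG.neg_mem_compact b (hPc.1 hb).2) h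
    rcases hP.mem_or_neg_mem _ h with h' | h'
    · exact Or.inl (hPc.2 ⟨h', hc⟩)
    · rw [neg_sub] at h'
      exact Or.inr (hPc.2 ⟨h', by simpa using hG.neg_mem_compact _ hc⟩)
  have hspan : Submodule.span ℝ (Δc : Set V) ≤ Submodule.span ℝ (Pc : Set V) := by
    refine Submodule.span_le.2 fun α hα => ?_
    rcases hP.mem_or_neg_mem α (hG.compact_subset hα) with h | h
    · exact Submodule.subset_span (hPc.2 ⟨h, hα⟩)
    · simpa using neg_mem (Submodule.subset_span (hPc.2 ⟨h, hG.neg_mem_compact α hα⟩) :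
        -α ∈ Submodule.span ℝ (Pc : Set V))
  obtain ⟨c, hc, hrep⟩ := hΔ.exists_nonneg_coeffs_of_dominant hPcΔ hPcadd hPcneg hPcsub
    (neg_mem (hspan hK)) fun α hα => by
      rw [inner_neg_left, inner_add_left]
      linarith [hβc α (hPc.1 hα).1 (hPc.1 hα).2, hβ'c α (hPc.1 hα).1 (hPc.1 hα).2]
  have hρ : ∀ γ ∈ Δp, 0 < ⟪γ, ∑ γ' ∈ Δp, γ'⟫ := fun γ hγ =>
    hΔ.inner_sum_pos hP.subset hP.add_mem hP.neg_notMem hγ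
  have hneg : 0 ≤ ⟪-(β + β'), ∑ γ' ∈ Δp, γ'⟫ := by
    rw [hrep, sum_inner]
    refine sum_nonneg fun γ hγ => ?_
    rw [real_inner_smul_left]
    exact mul_nonneg (hc γ) (hρ γ (hPc.1 (indecomposables_subset Pc hγ)).1).le
  rw [inner_neg_left, inner_add_left] at hneg
  linarith [hρ β hβ, hρ β' hβ']

lemma exists_mem_orthogonal_inner_pos [FiniteDimensional ℝ V] {Ψ₀ : Finset V}
    (hΨ₀ : IsInvariantComplexStructure Δ Δc Δnc Ψ₀) :
    ∃ z₁ ∈ (Submodule.span ℝ (Δc : Set V))ᗮ, ∀ β ∈ Δp, β ∈ Δnc →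
      (∀ α ∈ Δp, α ∈ Δc → ⟪β, α⟫ ≤ 0) → 0 < ⟪β, z₁⟫ := by
  classical
  set K := Submodule.span ℝ (Δc : Set V)
  set B := {β ∈ Δp | β ∈ Δnc ∧ ∀ α ∈ Δp, α ∈ Δc → ⟪β, α⟫ ≤ 0}
  obtain ⟨z₀, hz₀K, hz₀⟩ := hΨ₀.exists_mem_orthogonal_inner_ne_zero hΔ hG
  have hpr : ∀ x, ∀ w ∈ Kᗮ, ⟪Kᗮ.starProjection x, w⟫ = ⟪x, w⟫ := fun x w hw => by
    rw [Submodule.inner_starProjection_left_eq_right, Submodule.starProjection_eq_self_iff.2 hw]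
  have hpr_nonneg : ∀ β ∈ B, ∀ β' ∈ B, 0 ≤ ⟪Kᗮ.starProjection β, Kᗮ.starProjection β'⟫ := by
    intro β hβ β' hβ'
    simp only [B, mem_filter] at hβ hβ'
    -- in one simple factor the projections agree (`β + β' ∈ K` being impossible), across
    -- factors they are orthogonal
    by_cases hreach : (rootGraph Δ).Reachable β β'
    · rcases hΨ₀.sub_mem_span_or_add_mem_span_of_reachable hΔ hG hβ.2.1 hβ'.2.1 hreach with h | h
      · have : Kᗮ.starProjection β' = Kᗮ.starProjection β := by
          rw [← sub_eq_zero, ← map_sub, Submodule.starProjection_orthogonal_val,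
            Submodule.starProjection_eq_self_iff.2 h, sub_self]
        rw [this]
        exact real_inner_self_nonneg
      · rw [add_comm] at h
        exact absurd h (add_notMem_span_compact hΔ hG hP hβ.1 hβ'.1 hβ.2.2 hβ'.2.2)
    · exact (inner_starProjection_eq_zero_of_not_reachable hG.compact_subset
        (hP.subset hβ.1) (hP.subset hβ'.1) hreach).ge
  have hpr_ne : ∀ β ∈ B, Kᗮ.starProjection β ≠ 0 := fun β hβ h =>
    hz₀ β (mem_filter.1 hβ).2.1 (by rw [← hpr β z₀ hz₀K, h, inner_zero_left])
  have hmem : ∑ β ∈ B, Kᗮ.starProjection β ∈ Kᗮ :=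
    sum_mem fun β _ => Submodule.starProjection_apply_mem _ _
  refine ⟨_, hmem, fun β hβp hβn hβc => ?_⟩
  have hβ : β ∈ B := mem_filter.2 ⟨hβp, hβn, hβc⟩
  rw [← hpr β _ hmem]
  exact inner_sum_pos_of_inner_nonneg hpr_nonneg hβ (hpr_ne β hβ)

lemma exists_mem_orthogonal_inner_ne_zero_inner_pos [FiniteDimensional ℝ V] {Ψ₀ : Finset V}
    (hΨ₀ : IsInvariantComplexStructure Δ Δc Δnc Ψ₀) :
    ∃ z ∈ (Submodule.span ℝ (Δc : Set V))ᗮ, (∀ γ ∈ Δnc, ⟪γ, z⟫ ≠ 0) ∧ ∀ β ∈ Δp, β ∈ Δnc →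
      (∀ α ∈ Δp, α ∈ Δc → ⟪β, α⟫ ≤ 0) → 0 < ⟪β, z⟫ := by
  classical
  obtain ⟨z₀, hz₀K, hz₀⟩ := hΨ₀.exists_mem_orthogonal_inner_ne_zero hΔ hG
  obtain ⟨z₁, hz₁K, hz₁⟩ := exists_mem_orthogonal_inner_pos hΔ hG hP hΨ₀
  obtain ⟨t, hS, hT⟩ := exists_inner_ne_zero_and_inner_pos (T := {β ∈ Δp | β ∈ Δnc ∧
    ∀ α ∈ Δp, α ∈ Δc → ⟪β, α⟫ ≤ 0}) hz₀ fun β hβ => by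
      simp only [mem_filter] at hβ
      exact hz₁ β hβ.1 hβ.2.1 hβ.2.2
  exact ⟨z₁ + t • z₀, add_mem hz₁K (Submodule.smul_mem _ t hz₀K), hS,
    fun β hβp hβn hβc => hT β (mem_filter.2 ⟨hβp, hβn, hβc⟩)⟩

omit hΔ hP in
lemma isInvariantComplexStructure_filter_inner_pos {z : V}
    (hzK : z ∈ (Submodule.span ℝ (Δc : Set V))ᗮ) (hz : ∀ γ ∈ Δnc, ⟪γ, z⟫ ≠ 0) :
    IsInvariantComplexStructure Δ Δc Δnc {γ ∈ Δnc | 0 < ⟪γ, z⟫} := by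
  have hc : ∀ α ∈ Δc, ⟪α, z⟫ = 0 := fun α hα =>
    Submodule.inner_right_of_mem_orthogonal (Submodule.subset_span hα) hzK
  refine ⟨filter_subset _ _, fun β hβ => ?_, fun β hβ hnβ => ?_, fun β hβ β' hβ' hsum => ?_,
    fun α hα ψ hψ hsum => ?_⟩ <;> simp only [mem_filter, inner_neg_left] at *
  · rcases (hz β hβ).lt_or_gt with h | h
    · exact Or.inr ⟨hG.neg_mem_noncompact β hβ, by linarith⟩
    · exact Or.inl ⟨hβ, h⟩
  · linarith [hβ.2, hnβ.2]
  · have := hc _ (hG.add_noncompact_mem_compact β hβ.1 β' hβ'.1 hsum)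
    rw [inner_add_left] at this
    linarith [hβ.2, hβ'.2]
  · refine ⟨hG.add_mem_noncompact α hα ψ hψ.1 hsum, ?_⟩
    rw [inner_add_left, hc α hα, zero_add]
    exact hψ.2

end HermitianRootSystem

open HermitianRootSystem in
theorem exists_ics_forall_pos_inner_compact_general
    {V : Type*} [NormedAddCommGroup V] [InnerProductSpace ℝ V] [FiniteDimensional ℝ V]
    (Δ Δc Δnc Δp : Finset V)
    (hne : ∀ α ∈ Δ, α ≠ 0)
    (hcrys : ∀ α ∈ Δ, ∀ β ∈ Δ, ∃ k : ℤ, 2 * ⟪β, α⟫ / ⟪α, α⟫ = (k : ℝ))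
    (hrefl : ∀ α ∈ Δ, ∀ β ∈ Δ, β - (2 * ⟪β, α⟫ / ⟪α, α⟫) • α ∈ Δ)
    (hred : ∀ α ∈ Δ, ∀ t : ℝ, t • α ∈ Δ → t • α = α ∨ t • α = -α)
    -- `Δ = Δ_c ⊔ Δ_nc`, both stable under negation
    (hcle : Δc ⊆ Δ) (hnle : Δnc ⊆ Δ)
    (hcov : ∀ α ∈ Δ, α ∈ Δc ∨ α ∈ Δnc)
    (hdisj : ∀ α ∈ Δc, α ∉ Δnc)
    (hcneg : ∀ α ∈ Δc, -α ∈ Δc) (hncneg : ∀ α ∈ Δnc, -α ∈ Δnc)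
    -- the grading is compatible with addition of roots
    (hcc : ∀ α ∈ Δc, ∀ α' ∈ Δc, α + α' ∈ Δ → α + α' ∈ Δc)
    (hcn : ∀ α ∈ Δc, ∀ α' ∈ Δnc, α + α' ∈ Δ → α + α' ∈ Δnc)
    (hnn : ∀ α ∈ Δnc, ∀ α' ∈ Δnc, α + α' ∈ Δ → α + α' ∈ Δc)
    -- `Δ₊` is a positive system
    (hple : Δp ⊆ Δ)
    (hpcov : ∀ α ∈ Δ, α ∈ Δp ∨ -α ∈ Δp)
    (hpneg : ∀ α ∈ Δp, -α ∉ Δp)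
    (hpadd : ∀ α ∈ Δp, ∀ α' ∈ Δp, α + α' ∈ Δ → α + α' ∈ Δp)
    -- Hermitian type: at least one invariant complex structure exists
    (hherm : ∃ Ψ₀, IsInvariantComplexStructure Δ Δc Δnc Ψ₀) :
    ∃ Ψ, IsInvariantComplexStructure Δ Δc Δnc Ψ ∧
      ∀ β ∈ Δp, β ∈ Δnc → -β ∈ Ψ →
        ∃ α ∈ Δp, α ∈ Δc ∧ 0 < ⟪β, α⟫ := by
  have hΔ : IsReducedRootSystem Δ := ⟨hne, hcrys, hrefl, hred⟩
  have hG : IsCompactGrading Δ Δc Δnc := ⟨hcle, hnle, hcov, hdisj, hcneg, hncneg, hcc, hcn, hnn⟩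
  have hP : IsPositiveSystem Δ Δp := ⟨hple, hpcov, hpneg, hpadd⟩
  obtain ⟨Ψ₀, hΨ₀⟩ := hherm
  obtain ⟨z, hzK, hz, hzpos⟩ := exists_mem_orthogonal_inner_ne_zero_inner_pos hΔ hG hP hΨ₀
  refine ⟨_, isInvariantComplexStructure_filter_inner_pos hG hzK hz, fun β hβp hβn hβΨ => ?_⟩
  by_contra! hβc
  have := hzpos β hβp hβn hβc
  rw [Finset.mem_filter, inner_neg_left] at hβΨ
  linarith [hβΨ.2]

/-- **Lemma on noncompact roots of non-classical Hermitian-type flag domains.**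
Let `Δ` be a finite reduced crystallographic reflection-closed root system in a real inner
product space, graded as `Δ = Δ_c ⊔ Δ_nc` compatibly with a Cartan decomposition.  Assume
some invariant complex structure exists (Hermitian type) and that the positive system
`Δ₊` is non-classical (there are `β, β' ∈ Δ⁺_nc` with `β + β' ∈ Δ`).  Then there is an
invariant complex structure `Ψ` such that every `β ∈ Δ⁺_nc ∩ (-Ψ)` pairs strictly
positively with some compact positive root. -/
theorem exists_ics_forall_pos_inner_compact
    {V : Type*} [NormedAddCommGroup V] [InnerProductSpace ℝ V] [FiniteDimensional ℝ V]
    (Δ Δc Δnc Δp : Finset V)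
    (hne : ∀ α ∈ Δ, α ≠ 0)
    (hcrys : ∀ α ∈ Δ, ∀ β ∈ Δ, ∃ k : ℤ, 2 * ⟪β, α⟫ / ⟪α, α⟫ = (k : ℝ))
    (hrefl : ∀ α ∈ Δ, ∀ β ∈ Δ, β - (2 * ⟪β, α⟫ / ⟪α, α⟫) • α ∈ Δ)
    (hred : ∀ α ∈ Δ, ∀ t : ℝ, t • α ∈ Δ → t • α = α ∨ t • α = -α)
    -- `Δ = Δ_c ⊔ Δ_nc`, both stable under negation
    (hcle : Δc ⊆ Δ) (hnle : Δnc ⊆ Δ)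
    (hcov : ∀ α ∈ Δ, α ∈ Δc ∨ α ∈ Δnc)
    (hdisj : ∀ α ∈ Δc, α ∉ Δnc)
    (hcneg : ∀ α ∈ Δc, -α ∈ Δc) (hncneg : ∀ α ∈ Δnc, -α ∈ Δnc)
    -- the grading is compatible with addition of roots
    (hcc : ∀ α ∈ Δc, ∀ α' ∈ Δc, α + α' ∈ Δ → α + α' ∈ Δc)
    (hcn : ∀ α ∈ Δc, ∀ α' ∈ Δnc, α + α' ∈ Δ → α + α' ∈ Δnc)
    (hnn : ∀ α ∈ Δnc, ∀ α' ∈ Δnc, α + α' ∈ Δ → α + α' ∈ Δc)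
    -- `Δ₊` is a positive system
    (hple : Δp ⊆ Δ)
    (hpcov : ∀ α ∈ Δ, α ∈ Δp ∨ -α ∈ Δp)
    (hpneg : ∀ α ∈ Δp, -α ∉ Δp)
    (hpadd : ∀ α ∈ Δp, ∀ α' ∈ Δp, α + α' ∈ Δ → α + α' ∈ Δp)
    -- Hermitian type: at least one invariant complex structure exists
    (hherm : ∃ Ψ₀, IsInvariantComplexStructure Δ Δc Δnc Ψ₀)
    -- the positive system is non-classical
    (hnoncl : ∃ β ∈ Δp, β ∈ Δnc ∧ ∃ β' ∈ Δp, β' ∈ Δnc ∧ β + β' ∈ Δ) :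
    ∃ Ψ, IsInvariantComplexStructure Δ Δc Δnc Ψ ∧
      ∀ β ∈ Δp, β ∈ Δnc → -β ∈ Ψ →
        ∃ α ∈ Δp, α ∈ Δc ∧ 0 < ⟪β, α⟫ :=
  exists_ics_forall_pos_inner_compact_general Δ Δc Δnc Δp hne hcrys hrefl hred hcle hnle hcov hdisj
    hcneg hncneg hcc hcn hnn hple hpcov hpneg hpadd hherm
end
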